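/- Let 𝒪 be the ring of integers of an imaginary quadratic field F and let q be a positive integer divisible by 4. Then there exist a positive integer a with a ≡ 1 (mod q) and an element c ∈ 𝒪 with a𝒪 + c𝒪 = 𝒪 such that the Jacobi symbol (N(c)/a) equals −1, where N(c) := c·conj(c) ∈ ℤ. (In particular, it is not true that (c·conj(c)/a) = 1 for all a ∈ 1 + qℤ and all c ∈ 𝒪 coprime to a.) -/

import Mathlib

noncomputable section

/-- ω = (d + √d)/2 where √d = i·√(-d) for the discriminant d < 0. -/
def omg (d : ℤ) : ℂ := ((d : ℂ) + Complex.I * (Real.sqrt (-(d : ℝ)) : ℝ)) / 2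

/-- d is the discriminant of an imaginary quadratic field. -/
def IsDisc (d : ℤ) : Prop :=
  d < 0 ∧ ((d % 4 = 1 ∧ Squarefree d) ∨
    (d % 4 = 0 ∧ Squarefree (d / 4) ∧ (d / 4 % 4 = 2 ∨ d / 4 % 4 = 3)))

/-- The ring of integers 𝒪 = ℤ + ℤω of the imaginary quadratic field of
discriminant d, as a subset of ℂ. -/
def Oint (d : ℤ) : Set ℂ := {z | ∃ a b : ℤ, z = (a : ℂ) + (b : ℂ) * omg d}

/-- Q is a nonzero ideal of 𝒪. -/
def IsIdealOf (d : ℤ) (Q : Set ℂ) : Prop :=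
  Q ⊆ Oint d ∧ (0 : ℂ) ∈ Q ∧ (∃ q ∈ Q, q ≠ 0) ∧
    (∀ x ∈ Q, ∀ y ∈ Q, x + y ∈ Q) ∧ (∀ r ∈ Oint d, ∀ q ∈ Q, r * q ∈ Q)

open Complex

/-! Put `D = -d` or `D = -d/4` according as `d ≡ 1` or `0 (mod 4)`; then `i√D ∈ 𝒪`, so
every `n = x² + D y²` is the norm of `c = x + y i√D`. Taking `y` to be the odd part `m` of `q`
and `x ≡ 1 (mod m)` with a suitable residue mod 8 makes `n` coprime to `q` with
`n ≡ 3, 5, 7 (mod 8)`, so `(-1/n) = -1` or `(2/n) = -1`. Choose `a ≡ 1 (mod q)` in the class of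
that `-1` or `2` mod `n`: as `a ≡ 1 (mod 4)`, reciprocity gives `(n/a) = (a/n) = -1`, and
`(n/a) ≠ 0` makes `N(c)`, hence `c`, coprime to `a`. -/

lemma exists_jacobiSym_eq_neg_one {n : ℕ} (hn : n % 8 = 3 ∨ n % 8 = 5 ∨ n % 8 = 7) :
    ∃ b : ℕ, jacobiSym b n = -1 := by
  have hodd : Odd n := Nat.odd_iff.mpr (by omega)
  by_cases h4 : n % 4 = 3
  · refine ⟨n - 1, ?_⟩
    have hneg : ((n - 1 : ℕ) : ℤ) % n = -1 % n := by
      refine Int.ModEq.eq (Int.modEq_iff_dvd.mpr ⟨-1, ?_⟩)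
      rw [Nat.cast_sub (by omega)]
      ring
    rw [jacobiSym.mod_left' hneg, jacobiSym.at_neg_one hodd, ZMod.χ₄_nat_three_mod_four h4]
  · refine ⟨2, ?_⟩
    rw [Nat.cast_ofNat, jacobiSym.at_two hodd, ZMod.χ₈_nat_eq_if_mod_eight,
      if_neg (by omega), if_neg (by omega)]

lemma exists_modEq_one_jacobiSym_eq_neg_one {q n : ℕ} (h4 : 4 ∣ q) (hcop : q.Coprime n)
    (hn : n % 8 = 3 ∨ n % 8 = 5 ∨ n % 8 = 7) :
    ∃ a : ℕ, a ≡ 1 [MOD q] ∧ jacobiSym n a = -1 := by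
  obtain ⟨b, hb⟩ := exists_jacobiSym_eq_neg_one hn
  obtain ⟨a, ha1, hab⟩ := Nat.chineseRemainder hcop 1 b
  refine ⟨a, ha1, ?_⟩
  have hab' : (a : ℤ) % n = (b : ℤ) % n := by exact_mod_cast hab
  have ha4 : a % 4 = 1 := Nat.ModEq.of_dvd h4 ha1
  rw [← jacobiSym.quadratic_reciprocity_one_mod_four ha4 (Nat.odd_iff.mpr (by omega)),
    jacobiSym.mod_left' hab', hb]

lemma exists_sq_add_mod_eight {D : ℕ} (hD : D % 4 ≠ 0) :
    ∃ r : ℕ, (r ^ 2 + D) % 8 = 3 ∨ (r ^ 2 + D) % 8 = 5 ∨ (r ^ 2 + D) % 8 = 7 := by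
  have : D % 8 = 1 ∨ D % 8 = 2 ∨ D % 8 = 3 ∨ D % 8 = 5 ∨ D % 8 = 6 ∨ D % 8 = 7 := by omega
  rcases this with h | h | h | h | h | h
  exacts [⟨2, by omega⟩, ⟨1, by omega⟩, ⟨0, by omega⟩, ⟨0, by omega⟩, ⟨1, by omega⟩,
    ⟨2, by omega⟩]

lemma Nat.sq_mod_eight_eq_one_of_odd {m : ℕ} (hm : Odd m) : m ^ 2 % 8 = 1 := by
  obtain ⟨k, rfl⟩ := hm
  have : (2 * k + 1) ^ 2 = 4 * (k * (k + 1)) + 1 := by ring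
  rw [this]
  have := (Nat.even_mul_succ_self k).two_dvd
  omega

lemma exists_coprime_sq_add_mul_sq {D q : ℕ} (hD : D % 4 ≠ 0) (hq : q ≠ 0) :
    ∃ x y : ℕ, q.Coprime (x ^ 2 + D * y ^ 2) ∧
      ((x ^ 2 + D * y ^ 2) % 8 = 3 ∨ (x ^ 2 + D * y ^ 2) % 8 = 5 ∨
        (x ^ 2 + D * y ^ 2) % 8 = 7) := by
  obtain ⟨k, m, hm, rfl⟩ := Nat.exists_eq_two_pow_mul_odd hq
  obtain ⟨r, hr⟩ := exists_sq_add_mod_eight hD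
  have h8m : Nat.Coprime 8 m := Nat.Coprime.pow_left 3 (Nat.coprime_two_left.mpr hm)
  obtain ⟨x, hx8, hxm⟩ := Nat.chineseRemainder h8m r 1
  have hmod8 : (x ^ 2 + D * m ^ 2) % 8 = (r ^ 2 + D) % 8 := by
    have := (hx8.pow 2).add (Nat.ModEq.mul_left D (show m ^ 2 ≡ 1 [MOD 8] from
      Nat.sq_mod_eight_eq_one_of_odd hm))
    simpa [Nat.ModEq] using this
  have hmodm : x ^ 2 + D * m ^ 2 ≡ 1 [MOD m] := by
    have hdvd : m ∣ D * m ^ 2 := (dvd_pow_self m two_ne_zero).mul_left D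
    have := (hxm.pow 2).add (Nat.modEq_zero_iff_dvd.mpr hdvd)
    simpa using this
  refine ⟨x, m, Nat.Coprime.mul_left ?_ ?_, hmod8 ▸ hr⟩
  · exact Nat.Coprime.pow_left k (Nat.coprime_two_left.mpr (Nat.odd_iff.mpr (by omega)))
  · simpa [Nat.coprime_comm] using hmodm.gcd_eq

lemma intCast_add_intCast_mul_mem_Oint {d : ℤ} {s : ℂ} (hs : s ∈ Oint d) (x y : ℤ) :
    (x : ℂ) + y * s ∈ Oint d := by
  obtain ⟨A, B, rfl⟩ := hs
  exact ⟨x + y * A, y * B, by push_cast; ring⟩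

lemma intCast_mul_mem_Oint {d : ℤ} {z : ℂ} (hz : z ∈ Oint d) (u : ℤ) :
    (u : ℂ) * z ∈ Oint d := by
  obtain ⟨A, B, rfl⟩ := hz
  exact ⟨u * A, u * B, by push_cast; ring⟩

lemma star_mem_Oint {d : ℤ} {z : ℂ} (hz : z ∈ Oint d) : star z ∈ Oint d := by
  obtain ⟨A, B, rfl⟩ := hz
  refine ⟨A + B * d, -B, ?_⟩
  simp only [omg, star_add, star_mul', star_intCast, star_div₀, star_def, conj_I, conj_ofReal,
    map_ofNat]
  push_cast
  ring

lemma exists_I_mul_sqrt_mem_Oint {d : ℤ} (hd : IsDisc d) :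
    ∃ D : ℕ, D % 4 ≠ 0 ∧ I * (√(D : ℝ) : ℂ) ∈ Oint d := by
  obtain ⟨hneg, ⟨h1, -⟩ | ⟨h0, -, h23⟩⟩ := hd
  · refine ⟨(-d).toNat, by omega, -d, 2, ?_⟩
    have hD : (((-d).toNat : ℕ) : ℝ) = -(d : ℝ) := by
      exact_mod_cast Int.toNat_of_nonneg (by omega)
    rw [hD, omg]
    push_cast
    ring
  · obtain ⟨k, rfl⟩ : (4 : ℤ) ∣ d := Int.dvd_of_emod_eq_zero h0
    rw [Int.mul_ediv_cancel_left _ (by norm_num)] at h23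
    refine ⟨(-k).toNat, by omega, -(2 * k), 1, ?_⟩
    have hD : (((-k).toNat : ℕ) : ℝ) = -(k : ℝ) := by
      exact_mod_cast Int.toNat_of_nonneg (by omega)
    have hsqrt : √(-((4 * k : ℤ) : ℝ)) = 2 * √(-(k : ℝ)) := by
      rw [show -((4 * k : ℤ) : ℝ) = 2 ^ 2 * -(k : ℝ) by push_cast; ring,
        Real.sqrt_mul (by positivity), Real.sqrt_sq (by norm_num)]
    rw [hD, omg, hsqrt]
    push_cast
    ring

lemma mul_star_add_mul_I_mul_sqrt (x y D : ℕ) :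
    ((x : ℂ) + y * (I * (√(D : ℝ) : ℂ))) * star ((x : ℂ) + y * (I * (√(D : ℝ) : ℂ))) =
      ((x ^ 2 + D * y ^ 2 : ℕ) : ℂ) := by
  have hsq : ((√(D : ℝ) : ℝ) : ℂ) ^ 2 = D := by
    rw [← ofReal_pow, Real.sq_sqrt (Nat.cast_nonneg D), ofReal_natCast]
  simp only [star_add, star_mul', star_natCast, star_def, conj_I, conj_ofReal]
  push_cast
  linear_combination (-(y : ℂ) ^ 2 * (√(D : ℝ) : ℂ) ^ 2) * I_sq + (y : ℂ) ^ 2 * hsq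

lemma jacobiSym.isCoprime_of_eq_neg_one {a : ℤ} {b : ℕ} (h : jacobiSym a b = -1) :
    IsCoprime a b := by
  rw [Int.isCoprime_iff_gcd_eq_one]
  by_contra hgcd
  have hb : b ≠ 0 := by
    rintro rfl
    simp [jacobiSym.zero_right] at h
  have := jacobiSym.eq_zero_iff.mpr ⟨hb, hgcd⟩
  rw [h] at this
  norm_num at this

/-- for every positive q divisible by 4 there exist a ≡ 1 mod q and
c ∈ 𝒪 coprime to a with Jacobi symbol (N(c)/a) = -1. -/
theorem stmt19 (d : ℤ) (hd : IsDisc d) (q : ℕ) (hq : 0 < q) (h4 : 4 ∣ q) :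
    ∃ a : ℕ, 0 < a ∧ a % q = 1 ∧
      ∃ c ∈ Oint d,
        (∃ x ∈ Oint d, ∃ y ∈ Oint d, (a : ℂ) * x + c * y = 1) ∧
        ∃ Nc : ℤ, (Nc : ℂ) = c * star c ∧ jacobiSym Nc a = -1 := by
  obtain ⟨D, hD, hs⟩ := exists_I_mul_sqrt_mem_Oint hd
  obtain ⟨x, y, hcop, hmod8⟩ := exists_coprime_sq_add_mul_sq hD hq.ne'
  obtain ⟨a, ha1, hJ⟩ := exists_modEq_one_jacobiSym_eq_neg_one h4 hcop hmod8
  have haq : a % q = 1 := Eq.trans ha1 (Nat.mod_eq_of_lt (by have := Nat.le_of_dvd hq h4; omega))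
  set c : ℂ := (x : ℂ) + y * (I * (√(D : ℝ) : ℂ))
  have hcO : c ∈ Oint d := by exact_mod_cast intCast_add_intCast_mul_mem_Oint hs x y
  have hnorm : c * star c = ((x ^ 2 + D * y ^ 2 : ℕ) : ℂ) := mul_star_add_mul_I_mul_sqrt x y D
  obtain ⟨u, v, huv⟩ := jacobiSym.isCoprime_of_eq_neg_one hJ
  have hbezout : (a : ℂ) * v + c * (u * star c) = 1 := by
    have huv' : (u : ℂ) * ((x ^ 2 + D * y ^ 2 : ℕ) : ℂ) + v * a = 1 := by exact_mod_cast huv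
    linear_combination huv' + u * hnorm
  exact ⟨a, Nat.pos_of_ne_zero (by rintro rfl; simp at haq), haq, c, hcO,
    ⟨v, ⟨v, 0, by simp⟩, u * star c, intCast_mul_mem_Oint (star_mem_Oint hcO) u, hbezout⟩,
    _, hnorm.symm, hJ⟩
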